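/- arXiv:1212.6309 — 3 statements merged into one kernel-verified Lean document; each statement's English description precedes it below -/
import Mathlib

section
/- For the system ẋ = u·x, x(0) = x₀ > 0, with controls taking values in [α, β] where α ≥ 1, the constant control u ≡ α satisfies J[α](T) ≥ J[u](T) for every admissible control u and every T ≥ 0, where J[u](T) = ∫₀ᵀ (1 − u(t))·x(t) dt. In particular u ≡ α is strongly optimal. -/
open MeasureTheory intervalIntegral

/-- In the Halkin-type example `ẋ = u·x`, `x(0) = x₀ > 0`, controls in `[α, β]`
with `α ≥ 1`, the constant control `u ≡ α` satisfies `J[α](T) ≥ J[u](T)` for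
every admissible control `u` and every horizon `T ≥ 0`, where
`J[u](T) = ∫₀ᵀ (1 − u(t))·x_u(t) dt` and `x_u(t) = x₀ exp(∫₀ᵗ u)`.
In particular `u ≡ α` is strongly optimal. -/
theorem stmt1 (α β x₀ : ℝ) (hαβ : α ≤ β) (hα : 1 ≤ α) (hx₀ : 0 < x₀)
    (u : ℝ → ℝ) (hu_meas : Measurable u)
    (hu_adm : ∀ t : ℝ, u t ∈ Set.Icc α β) :
    ∀ T : ℝ, 0 ≤ T →
      (∫ t in (0:ℝ)..T, (1 - u t) * (x₀ * Real.exp (∫ s in (0:ℝ)..t, u s)))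
        ≤ ∫ t in (0:ℝ)..T, (1 - α) * (x₀ * Real.exp (α * t)) := by
  intro T hT
  -- u is interval integrable on every interval
  have hu_bd : ∀ t, |u t| ≤ max |α| |β| := by
    intro t
    rcases hu_adm t with ⟨h1, h2⟩
    rcases abs_le.mp (le_refl |u t|) with _
    rcases le_or_gt 0 (u t) with h | h
    · calc |u t| = u t := abs_of_nonneg h
        _ ≤ β := h2
        _ ≤ |β| := le_abs_self β
        _ ≤ max |α| |β| := le_max_right _ _
    · calc |u t| = -u t := abs_of_neg h
        _ ≤ -α := by linarith
        _ ≤ |α| := neg_le_abs α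
        _ ≤ max |α| |β| := le_max_left _ _
  have hu_int : ∀ a b : ℝ, IntervalIntegrable u volume a b := by
    intro a b
    constructor <;>
    · apply Measure.integrableOn_of_bounded (M := max |α| |β|) measure_Ioc_lt_top.ne
        hu_meas.aestronglyMeasurable
      exact ae_of_all _ fun t => hu_bd t
  -- the primitive is continuous
  have hprim : Continuous fun t => ∫ s in (0:ℝ)..t, u s :=
    intervalIntegral.continuous_primitive hu_int 0
  set X : ℝ → ℝ := fun t => x₀ * Real.exp (∫ s in (0:ℝ)..t, u s) with hX
  have hXcont : Continuous X := continuous_const.mul (Real.continuous_exp.comp hprim)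
  -- lower bound on the primitive for t ≥ 0
  have hlow : ∀ t : ℝ, 0 ≤ t → α * t ≤ ∫ s in (0:ℝ)..t, u s := by
    intro t ht
    have : ∫ s in (0:ℝ)..t, (α : ℝ) ≤ ∫ s in (0:ℝ)..t, u s := by
      apply intervalIntegral.integral_mono_on ht intervalIntegrable_const (hu_int 0 t)
      intro s _; exact (hu_adm s).1
    simp only [intervalIntegral.integral_const, smul_eq_mul, sub_zero] at this
    linarith
  -- pointwise inequality on [0,T]
  have hpt : ∀ t ∈ Set.Icc (0:ℝ) T,
      (1 - u t) * X t ≤ (1 - α) * (x₀ * Real.exp (α * t)) := by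
    intro t ht
    have hXpos : 0 < X t := mul_pos hx₀ (Real.exp_pos _)
    have h1 : (1 - u t) * X t ≤ (1 - α) * X t := by
      apply mul_le_mul_of_nonneg_right _ hXpos.le
      linarith [(hu_adm t).1]
    have h2 : (1 - α) * X t ≤ (1 - α) * (x₀ * Real.exp (α * t)) := by
      apply mul_le_mul_of_nonpos_left _ (by linarith)
      exact mul_le_mul_of_nonneg_left
        (Real.exp_le_exp.mpr (hlow t ht.1)) hx₀.le
    linarith
  -- integrability of the left integrand on [0,T]
  have hint1 : IntervalIntegrable (fun t => (1 - u t) * X t) volume 0 T := by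
    rw [intervalIntegrable_iff]
    apply Measure.integrableOn_of_bounded
        (M := (1 + max |α| |β|) * (x₀ * Real.exp ((max |α| |β|) * max |T| 0)))
    · rw [Set.uIoc_of_le hT]; exact measure_Ioc_lt_top.ne
    · exact ((measurable_const.sub hu_meas).mul hXcont.measurable).aestronglyMeasurable
    · refine (ae_restrict_iff' measurableSet_uIoc).mpr (ae_of_all _ fun t htmem => ?_)
      have ht0 : 0 ≤ t := by
        rcases Set.mem_uIoc.mp htmem with h | h
        · exact h.1.le
        · exact le_trans hT h.1.le
      have htT : t ≤ max |T| 0 := by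
        rcases Set.mem_uIoc.mp htmem with h | h
        · exact le_trans h.2 (le_trans (le_abs_self T) (le_max_left _ _))
        · exact le_trans h.2 (le_max_right _ _)
      have hub : ∫ s in (0:ℝ)..t, u s ≤ (max |α| |β|) * max |T| 0 := by
        have : ∫ s in (0:ℝ)..t, u s ≤ ∫ s in (0:ℝ)..t, (max |α| |β| : ℝ) := by
          apply intervalIntegral.integral_mono_on ht0 (hu_int 0 t)
            intervalIntegrable_const
          intro s _; exact le_trans (le_abs_self _) (hu_bd s)
        simp only [intervalIntegral.integral_const, smul_eq_mul, sub_zero] at this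
        calc ∫ s in (0:ℝ)..t, u s ≤ t * max |α| |β| := this
          _ ≤ max |T| 0 * max |α| |β| := by
              apply mul_le_mul_of_nonneg_right htT
              exact le_trans (abs_nonneg α) (le_max_left _ _)
          _ = max |α| |β| * max |T| 0 := mul_comm _ _
      rw [norm_mul]
      apply mul_le_mul
      · rw [Real.norm_eq_abs]
        calc |1 - u t| ≤ |1| + |u t| := abs_sub _ _
          _ ≤ 1 + max |α| |β| := by simp [hu_bd t]
      · rw [Real.norm_eq_abs, abs_of_pos (mul_pos hx₀ (Real.exp_pos _))]
        exact mul_le_mul_of_nonneg_left (Real.exp_le_exp.mpr hub) hx₀.le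
      · exact norm_nonneg _
      · positivity
  have hint2 : IntervalIntegrable (fun t => (1 - α) * (x₀ * Real.exp (α * t)))
      volume 0 T :=
    (Continuous.intervalIntegrable (by continuity)) 0 T
  exact intervalIntegral.integral_mono_on hT hint1 hint2 hpt
end

section
/- Suppose I* = lim_{t→∞} I(t) exists (as a finite limit, with the improper Riemann integral ∫₀^∞ c(t)A(t) dt converging). Then the function ψ⁰(T) = (I* − I(T))·A(T)⁻¹ equals ψ⁰(T) = (∫_T^∞ c(t)A(t) dt)·A(T)⁻¹, and ψ⁰ solves the adjoint system ψ̇ = −ψ·B − c with λ = 1. -/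
/-!
Write `v(T) = I* − I(T)`. The first claim is additivity of the interval integral,
`∫_T^S = I(S) − I(T)`. For the second, Lebesgue's differentiation theorem gives `v̇ = −c A`
almost everywhere, and differentiating the inverse, `d(A⁻¹)/dt = −A⁻¹ B A A⁻¹ = −A⁻¹ B`,
so the product rule for `ψ⁰ = v A⁻¹` yields `ψ̇⁰ = −c A A⁻¹ − v A⁻¹ B = −c − ψ⁰ B`.
-/

open Matrix MeasureTheory intervalIntegral Filter

attribute [local instance] Matrix.normedAddCommGroup Matrix.normedSpace

theorem MeasureTheory.locallyIntegrable_of_forall_intervalIntegrable {E : Type*}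
    [NormedAddCommGroup E] {f : ℝ → E} (hf : ∀ a b : ℝ, IntervalIntegrable f volume a b) :
    LocallyIntegrable f volume := fun x =>
  ⟨Set.Ioc (x - 1) (x + 1), Ioc_mem_nhds (by linarith) (by linarith), (hf _ _).1⟩

section MatrixDeriv

variable {𝕜 m n : Type*} [NontriviallyNormedField 𝕜] [CompleteSpace 𝕜] [Fintype m] [Fintype n]

theorem HasDerivAt.vecMul {v : 𝕜 → m → 𝕜} {M : 𝕜 → Matrix m n 𝕜} {v' : m → 𝕜}
    {M' : Matrix m n 𝕜} {x : 𝕜} (hv : HasDerivAt v v' x) (hM : HasDerivAt M M' x) :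
    HasDerivAt (fun t => v t ᵥ* M t) (v x ᵥ* M' + v' ᵥ* M x) x :=
  ((vecMulBilin 𝕜 𝕜).toContinuousBilinearMap (F := Matrix m n 𝕜)).hasDerivAt_of_bilinear
    (fun _ => hv) (fun _ => hM)

-- `HasDerivAt` only sees the (product) topology, so any norm inducing it may be used; the
-- `L∞`-operator norm makes the matrices a Banach algebra.
attribute [local instance] Matrix.linftyOpNormedAddCommGroup Matrix.linftyOpNormedSpace
  Matrix.linftyOpNormedRing Matrix.linftyOpNormedAlgebra in
theorem HasDerivAt.matrix_inv [DecidableEq n] {A : 𝕜 → Matrix n n 𝕜} {A' : Matrix n n 𝕜}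
    {x : 𝕜} (hA : HasDerivAt A A' x) (hx : IsUnit (A x)) :
    HasDerivAt (fun t => (A t)⁻¹) (-((A x)⁻¹ * A' * (A x)⁻¹)) x := by
  have : HasSummableGeomSeries (Matrix n n 𝕜) :=
    @instHasSummableGeomSeriesOfCompleteSpace _ _ (FiniteDimensional.complete 𝕜 _)
  obtain ⟨u, hu⟩ := hx
  have hinv := hasFDerivAt_ringInverse (𝕜 := 𝕜) u
  rw [hu] at hinv
  simp only [Matrix.nonsing_inv_eq_ringInverse]
  refine (hinv.comp_hasDerivAt x hA).congr_deriv ?_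
  simp [← hu, Matrix.coe_units_inv, mul_assoc]

end MatrixDeriv

theorem stmt11_general (d : ℕ) (B A : ℝ → Matrix (Fin d) (Fin d) ℝ)
    (c : ℝ → (Fin d → ℝ))
    (hAinv : ∀ t : ℝ, 0 ≤ t → IsUnit (A t))
    (hA : ∀ t : ℝ, 0 ≤ t → HasDerivAt A (B t * A t) t)
    (hc_loc : ∀ S T : ℝ, IntervalIntegrable (fun t => c t ᵥ* A t) volume S T)
    (Istar : Fin d → ℝ)
    (hIstar : Tendsto (fun T : ℝ => ∫ t in (0:ℝ)..T, c t ᵥ* A t)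
      atTop (nhds Istar)) :
    (∀ T : ℝ, 0 ≤ T →
      Tendsto (fun S : ℝ => ∫ t in T..S, c t ᵥ* A t) atTop
        (nhds (Istar - ∫ t in (0:ℝ)..T, c t ᵥ* A t))) ∧
    (∀ᵐ T ∂(volume.restrict (Set.Ici (0:ℝ))),
      HasDerivAt (fun T : ℝ => (Istar - ∫ t in (0:ℝ)..T, c t ᵥ* A t) ᵥ* (A T)⁻¹)
        (-(((Istar - ∫ t in (0:ℝ)..T, c t ᵥ* A t) ᵥ* (A T)⁻¹) ᵥ* B T) - c T)
        T) := by
  refine ⟨fun T _ => ?_, ?_⟩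
  · simp_rw [← integral_interval_sub_left (hc_loc 0 _) (hc_loc 0 T)]
    exact hIstar.sub_const _
  have hI :=
    LocallyIntegrable.ae_hasDerivAt_integral (locallyIntegrable_of_forall_intervalIntegrable hc_loc)
  filter_upwards [ae_restrict_of_ae hI, ae_restrict_mem measurableSet_Ici] with T hIT hT
  have hv := (hIT 0).const_sub Istar
  have hAA : A T * (A T)⁻¹ = 1 :=
    mul_nonsing_inv _ ((isUnit_iff_isUnit_det _).1 (hAinv T hT))
  convert hv.vecMul ((hA T hT).matrix_inv (hAinv T hT)) using 1
  simp only [mul_assoc, hAA, mul_one, vecMul_neg, neg_vecMul, vecMul_vecMul, vecMul_one]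
  abel

/-- The explicit (Aseev–Kryazhimskii type) formula for the adjoint variable:
if `I* = lim_{T→∞} I(T)` exists, where `I(T) = ∫₀ᵀ c(t)A(t) dt` and `A` is the
fundamental matrix of `Ȧ = B(t)A`, `A(0) = 1`, then
`ψ⁰(T) = (I* − I(T))·A(T)⁻¹` equals `(∫_T^∞ c(t)A(t) dt)·A(T)⁻¹` (the improper
Riemann integral `∫_T^∞` converging to `I* − I(T)`), and `ψ⁰` solves the
adjoint system `ψ̇ = −ψ·B − c` with `λ = 1` (a.e. on `[0,∞)`). -/
theorem stmt11 (d : ℕ) (B A : ℝ → Matrix (Fin d) (Fin d) ℝ)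
    (c : ℝ → (Fin d → ℝ))
    (hA0 : A 0 = 1) (hAinv : ∀ t : ℝ, 0 ≤ t → IsUnit (A t))
    (hA : ∀ t : ℝ, 0 ≤ t → HasDerivAt A (B t * A t) t)
    (hc_loc : ∀ S T : ℝ, IntervalIntegrable (fun t => c t ᵥ* A t) volume S T)
    (Istar : Fin d → ℝ)
    (hIstar : Tendsto (fun T : ℝ => ∫ t in (0:ℝ)..T, c t ᵥ* A t)
      atTop (nhds Istar)) :
    (∀ T : ℝ, 0 ≤ T →
      Tendsto (fun S : ℝ => ∫ t in T..S, c t ᵥ* A t) atTop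
        (nhds (Istar - ∫ t in (0:ℝ)..T, c t ᵥ* A t))) ∧
    (∀ᵐ T ∂(volume.restrict (Set.Ici (0:ℝ))),
      HasDerivAt (fun T : ℝ => (Istar - ∫ t in (0:ℝ)..T, c t ᵥ* A t) ᵥ* (A T)⁻¹)
        (-(((Istar - ∫ t in (0:ℝ)..T, c t ᵥ* A t) ᵥ* (A T)⁻¹) ᵥ* B T) - c T)
        T) :=
  stmt11_general d B A c hAinv hA hc_loc Istar hIstar
end

section
/- In the Halkin example with α > 1, let u⁰ ≡ α with corresponding trajectory x⁰, and take λ⁰ = 0 and ψ(t) = −e^{−αt} = −x₀/x⁰(t). Then: (i) ψ solves the adjoint equation ψ̇ = −ψ·u⁰ − λ⁰·(1 − u⁰) along x⁰, u⁰, i.e. ψ̇ = −α·ψ, with ψ(0) = −1; and (ii) the maximum condition max_{u∈[α,β]} [ψ(t)·u·x⁰(t) + λ⁰·(1−u)·x⁰(t)] is attained at u = α since ψ(t)·x⁰(t) = −x₀ < 0. Hence (0, ψ) with ψ(t) = −e^{−αt} is an abnormal solution of the maximum-principle relations for u⁰ ≡ α. -/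
/-- In the Halkin example with `α > 1` and `u⁰ ≡ α`, `x⁰(t) = x₀ e^{αt}`:
the function `ψ(t) = −e^{−αt}` solves the abnormal (`λ⁰ = 0`) adjoint
equation `ψ̇ = −ψ·u⁰ − λ⁰·(1 − u⁰) = −α·ψ` with `ψ(0) = −1`, and the
Hamiltonian maximum condition
`max_{u∈[α,β]} [ψ(t)·u·x⁰(t) + λ⁰·(1−u)·x⁰(t)]` is attained at `u = α`
(since `ψ(t)·x⁰(t) = −x₀ < 0`). Hence `(0, ψ)` is an abnormal solution of
the maximum-principle relations for `u⁰ ≡ α`. -/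
theorem stmt15 (α β x₀ : ℝ) (hα : 1 < α) (hαβ : α ≤ β) (hx₀ : 0 < x₀) :
    let x0fun : ℝ → ℝ := fun t => x₀ * Real.exp (α * t)
    let ψ : ℝ → ℝ := fun t => -Real.exp (-(α * t))
    let lam0 : ℝ := 0
    (∀ t : ℝ, HasDerivAt ψ (-(α * ψ t)) t) ∧
    ψ 0 = -1 ∧
    (∀ t : ℝ, ψ t * x0fun t = -x₀) ∧
    (∀ t : ℝ, 0 ≤ t → ∀ u ∈ Set.Icc α β,
      ψ t * u * x0fun t + lam0 * ((1 - u) * x0fun t)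
        ≤ ψ t * α * x0fun t + lam0 * ((1 - α) * x0fun t)) := by
  intro x0fun ψ lam0
  refine ⟨?_, by simp [ψ], ?_, ?_⟩
  · intro t
    have h : HasDerivAt (fun t : ℝ => -(α * t)) (-α) t := by
      simpa [Pi.neg_def] using ((hasDerivAt_id t).const_mul α).neg
    have := (h.exp).neg
    simpa [ψ, mul_comm, neg_mul, Pi.neg_def] using this
  · intro t
    simp only [ψ, x0fun]
    have h1 : Real.exp (-(α * t)) * Real.exp (α * t) = 1 := by
      rw [← Real.exp_add]; simp
    linear_combination (-x₀) * h1
  · intro t ht u hu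
    have hψ : ψ t * x0fun t = -x₀ := by
      simp only [ψ, x0fun]; have h1 : Real.exp (-(α * t)) * Real.exp (α * t) = 1 := by
        rw [← Real.exp_add]; simp
      linear_combination (-x₀) * h1
    have h1 : ψ t * u * x0fun t = u * (ψ t * x0fun t) := by ring
    have h2 : ψ t * α * x0fun t = α * (ψ t * x0fun t) := by ring
    simp only [lam0, zero_mul, add_zero, h1, h2, hψ]
    nlinarith [hu.1]
end
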